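/- If the Borel probability measures π^N on 𝒜 converge weakly-* to π^∞ (i.e., ∫ f dπ^N → ∫ f dπ^∞ for every bounded continuous f : 𝒜 → ℝ), then for every fixed measurable control u with finite cost, the averaged costs converge: J_{s,π^N}[u] → J_{s,π^∞}[u] as N → ∞. -/

import Mathlib

/-!
For a fixed control the cost `A ↦ cost(x_A, u)` is continuous on `𝒜`. Grönwall's inequality
bounds all trajectories `x_A`, `A ∈ 𝒜`, by one constant and makes `A ↦ x_A` Lipschitz for the
sup norm on `[s, T]`, since `x_A - x_A'` solves the equation of `A` forced by `(A - A') x_A'`;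
the quadratic cost is locally Lipschitz in the trajectory. By Tietze, this continuous function
on the compact set `𝒜` agrees on `𝒜` with a bounded continuous function on all matrices, and as
every `πᴺ` and `π∞` is carried by `𝒜`, weak-* convergence applies to it.
-/

open MeasureTheory Set Matrix Filter Topology

noncomputable instance matMS {k l : ℕ} : MeasurableSpace (Matrix (Fin k) (Fin l) ℝ) := borel _
instance matBS {k l : ℕ} : BorelSpace (Matrix (Fin k) (Fin l) ℝ) := ⟨rfl⟩

/-- The matrix 2-norm (operator norm w.r.t. Euclidean norms). -/
noncomputable def opN {k l : ℕ} (M : Matrix (Fin k) (Fin l) ℝ) : ℝ :=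
  ‖LinearMap.toContinuousLinearMap (Matrix.toEuclideanLin M)‖

/-- Application of a matrix to a Euclidean vector. -/
noncomputable def app {k l : ℕ} (M : Matrix (Fin k) (Fin l) ℝ)
    (v : EuclideanSpace ℝ (Fin l)) : EuclideanSpace ℝ (Fin k) :=
  Matrix.toEuclideanLin M v

/-- `x` is the solution on `[s,T]` of `ẋ = A x + B u`, `x(s) = x₀` (in integral form). -/
noncomputable def IsTraj {n m : ℕ} (B : Matrix (Fin n) (Fin m) ℝ) (s T : ℝ)
    (x₀ : EuclideanSpace ℝ (Fin n)) (A : Matrix (Fin n) (Fin n) ℝ)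
    (u : ℝ → EuclideanSpace ℝ (Fin m)) (x : ℝ → EuclideanSpace ℝ (Fin n)) : Prop :=
  ContinuousOn x (Set.Icc s T) ∧
  ∀ t ∈ Set.Icc s T, x t = x₀ + ∫ τ in s..t, (app A (x τ) + app B (u τ))

/-- The LQ cost `½∫ₛᵀ (xᵀQx + uᵀRu) dt + ½ x(T)ᵀ Q_f x(T)` of a trajectory/control pair. -/
noncomputable def cost {n m : ℕ} (Q Qf : Matrix (Fin n) (Fin n) ℝ) (R : Matrix (Fin m) (Fin m) ℝ)
    (s T : ℝ) (x : ℝ → EuclideanSpace ℝ (Fin n)) (u : ℝ → EuclideanSpace ℝ (Fin m)) : ℝ :=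
  (1/2) * (∫ t in s..T, ((inner ℝ (x t) (app Q (x t)) : ℝ) + (inner ℝ (u t) (app R (u t)) : ℝ)))
    + (1/2) * (inner ℝ (x T) (app Qf (x T)) : ℝ)

/-- An admissible process for the averaged problem: an integrable (and square-integrable)
control together with the corresponding family of trajectories, one for each `A ∈ 𝒜`. -/
noncomputable def Adm {n m : ℕ} (B : Matrix (Fin n) (Fin m) ℝ)
    (𝒜 : Set (Matrix (Fin n) (Fin n) ℝ)) (s T : ℝ) (x₀ : EuclideanSpace ℝ (Fin n))
    (u : ℝ → EuclideanSpace ℝ (Fin m))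
    (x : Matrix (Fin n) (Fin n) ℝ → ℝ → EuclideanSpace ℝ (Fin n)) : Prop :=
  MeasureTheory.IntegrableOn u (Set.Icc s T) ∧
  MeasureTheory.IntegrableOn (fun t => ‖u t‖ ^ 2) (Set.Icc s T) ∧
  ∀ A ∈ 𝒜, IsTraj B s T x₀ A u (x A)

/-- The averaged cost `J_{s,π}[u] = ∫_𝒜 cost(x_A, u) dπ(A)`. -/
noncomputable def Jcost {n m : ℕ} (Q Qf : Matrix (Fin n) (Fin n) ℝ)
    (R : Matrix (Fin m) (Fin m) ℝ) (s T : ℝ) (π : Measure (Matrix (Fin n) (Fin n) ℝ))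
    (u : ℝ → EuclideanSpace ℝ (Fin m))
    (x : Matrix (Fin n) (Fin n) ℝ → ℝ → EuclideanSpace ℝ (Fin n)) : ℝ :=
  ∫ A, cost Q Qf R s T (x A) u ∂π

/-- The value function `V_π(s,x₀)` of the averaged problem. -/
noncomputable def Val {n m : ℕ} (Q Qf : Matrix (Fin n) (Fin n) ℝ)
    (R : Matrix (Fin m) (Fin m) ℝ) (B : Matrix (Fin n) (Fin m) ℝ)
    (𝒜 : Set (Matrix (Fin n) (Fin n) ℝ)) (T : ℝ) (π : Measure (Matrix (Fin n) (Fin n) ℝ))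
    (s : ℝ) (x₀ : EuclideanSpace ℝ (Fin n)) : ℝ :=
  sInf {c | ∃ u x, Adm B 𝒜 s T x₀ u x ∧ c = Jcost Q Qf R s T π u x}

/-- Wasserstein-1 distance between measures on the matrix space, induced by the 2-norm. -/
noncomputable def W1 {k : ℕ} (π π' : Measure (Matrix (Fin k) (Fin k) ℝ)) : ℝ :=
  sInf {r | ∃ γ : Measure (Matrix (Fin k) (Fin k) ℝ × Matrix (Fin k) (Fin k) ℝ),
    γ.map Prod.fst = π ∧ γ.map Prod.snd = π' ∧ r = ∫ p, opN (p.1 - p.2) ∂γ}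

/-- Support of a measure. -/
def msupport {α : Type*} [TopologicalSpace α] [MeasurableSpace α]
    (π : Measure α) : Set α :=
  {A | ∀ U : Set α, IsOpen U → A ∈ U → 0 < π U}


open Real

lemma add_mul_gronwallBound_zero (a C x : ℝ) :
    a + C * gronwallBound 0 C a x = a * exp (C * x) := by
  rcases eq_or_ne C 0 with rfl | hC
  · simp [gronwallBound_K0]
  · rw [gronwallBound_of_K_ne_0 hC]
    field_simp
    ring

/-- Grönwall's inequality in integral form. -/
theorem le_mul_exp_of_le_add_mul_integral {φ : ℝ → ℝ} {s T a C : ℝ} (hC : 0 ≤ C)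
    (hφ : ContinuousOn φ (Icc s T)) (h : ∀ t ∈ Icc s T, φ t ≤ a + C * ∫ τ in s..t, φ τ) :
    ∀ t ∈ Icc s T, φ t ≤ a * exp (C * (t - s)) := by
  intro t ht
  have hsT : s ≤ T := ht.1.trans ht.2
  set φ' : ℝ → ℝ := IccExtend hsT ((Icc s T).domRestrict φ)
  have hφ'c : Continuous φ' := hφ.domRestrict.Icc_extend'
  have hφ'eq : EqOn φ' φ (Icc s T) := fun r hr => IccExtend_of_mem hsT _ hr
  have hint : ∀ r ∈ Icc s T, ∫ τ in s..r, φ' τ = ∫ τ in s..r, φ τ := fun r hr =>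
    intervalIntegral.integral_congr fun τ hτ =>
      hφ'eq ⟨(uIcc_of_le hr.1 ▸ hτ).1, ((uIcc_of_le hr.1 ▸ hτ).2.trans hr.2)⟩
  have hderiv : ∀ r, HasDerivAt (fun r => ∫ τ in s..r, φ' τ) (φ' r) r := fun r =>
    (hφ'c.integral_hasStrictDerivAt s r).hasDerivAt
  have hprim := le_gronwallBound_of_liminf_deriv_right_le (δ := 0) (K := C) (ε := a)
    (fun r _ => (hderiv r).continuousAt.continuousWithinAt)
    (fun r _ _ hr => (hderiv r).hasDerivWithinAt.liminf_right_slope_le hr)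
    (by simp) (fun r hr => by
      rw [hφ'eq (Ico_subset_Icc_self hr), hint r (Ico_subset_Icc_self hr), add_comm]
      exact h r (Ico_subset_Icc_self hr)) t ht
  calc φ t ≤ a + C * ∫ τ in s..t, φ τ := h t ht
    _ ≤ a + C * gronwallBound 0 C a (t - s) := by
      rw [← hint t ht]; gcongr
    _ = a * exp (C * (t - s)) := add_mul_gronwallBound_zero a C (t - s)

theorem norm_le_of_eq_add_integral_clm {E : Type*} [NormedAddCommGroup E] [NormedSpace ℝ E]
    {L : E →L[ℝ] E} {C : ℝ} (hL : ‖L‖ ≤ C) {s T : ℝ} {z₀ : E} {z w : ℝ → E}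
    (hz : ContinuousOn z (Icc s T)) (hw : IntegrableOn w (Icc s T))
    (heq : ∀ t ∈ Icc s T, z t = z₀ + ∫ τ in s..t, (L (z τ) + w τ)) :
    ∀ t ∈ Icc s T, ‖z t‖ ≤ (‖z₀‖ + ∫ τ in s..T, ‖w τ‖) * exp (C * (t - s)) := by
  refine le_mul_exp_of_le_add_mul_integral ((norm_nonneg L).trans hL) hz.norm fun t ht => ?_
  have hsub : Icc s t ⊆ Icc s T := Icc_subset_Icc_right ht.2
  have hLz : IntervalIntegrable (fun τ => L (z τ)) volume s t :=
    (L.continuous.comp_continuousOn (hz.mono hsub)).intervalIntegrable_of_Icc ht.1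
  have hwt : IntervalIntegrable w volume s t :=
    (intervalIntegrable_iff_integrableOn_Icc_of_le ht.1).2 (hw.mono_set hsub)
  have hLz_le : ‖∫ τ in s..t, L (z τ)‖ ≤ C * ∫ τ in s..t, ‖z τ‖ := by
    rw [← intervalIntegral.integral_const_mul]
    refine intervalIntegral.norm_integral_le_of_norm_le ht.1 (ae_of_all _ fun τ _ => ?_)
      (((hz.mono hsub).norm.const_smul C).intervalIntegrable_of_Icc ht.1)
    exact (L.le_opNorm _).trans (mul_le_mul_of_nonneg_right hL (norm_nonneg _))
  have hw_le : ‖∫ τ in s..t, w τ‖ ≤ ∫ τ in s..T, ‖w τ‖ :=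
    (intervalIntegral.norm_integral_le_integral_norm ht.1).trans
      (intervalIntegral.integral_mono_interval le_rfl ht.1 ht.2 (ae_of_all _ fun _ => norm_nonneg _)
        ((intervalIntegrable_iff_integrableOn_Icc_of_le (ht.1.trans ht.2)).2 hw).norm)
  calc ‖z t‖ = ‖z₀ + ((∫ τ in s..t, L (z τ)) + ∫ τ in s..t, w τ)‖ := by
        rw [heq t ht, intervalIntegral.integral_add hLz hwt]
    _ ≤ ‖z₀‖ + (‖∫ τ in s..t, L (z τ)‖ + ‖∫ τ in s..t, w τ‖) := by
        grw [norm_add_le, norm_add_le]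
    _ ≤ ‖z₀‖ + ((C * ∫ τ in s..t, ‖z τ‖) + ∫ τ in s..T, ‖w τ‖) := by grw [hLz_le, hw_le]
    _ = ‖z₀‖ + (∫ τ in s..T, ‖w τ‖) + C * ∫ τ in s..t, ‖z τ‖ := by ring

section MatrixOperator

variable {k l : ℕ}

noncomputable def appL (M : Matrix (Fin k) (Fin l) ℝ) :
    EuclideanSpace ℝ (Fin l) →L[ℝ] EuclideanSpace ℝ (Fin k) :=
  LinearMap.toContinuousLinearMap (Matrix.toEuclideanLin M)

lemma coe_appL (M : Matrix (Fin k) (Fin l) ℝ) : ⇑(appL M) = app M := rfl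

lemma opN_nonneg (M : Matrix (Fin k) (Fin l) ℝ) : 0 ≤ opN M := norm_nonneg _

lemma norm_app_le (M : Matrix (Fin k) (Fin l) ℝ) (v : EuclideanSpace ℝ (Fin l)) :
    ‖app M v‖ ≤ opN M * ‖v‖ :=
  (appL M).le_opNorm v

lemma app_sub (M : Matrix (Fin k) (Fin l) ℝ) (v w : EuclideanSpace ℝ (Fin l)) :
    app M (v - w) = app M v - app M w :=
  map_sub (appL M) v w

lemma sub_app (M M' : Matrix (Fin k) (Fin l) ℝ) (v : EuclideanSpace ℝ (Fin l)) :
    app (M - M') v = app M v - app M' v := by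
  simp [app]

lemma continuous_appL : Continuous (appL : Matrix (Fin k) (Fin l) ℝ → _) := by
  have : (appL : Matrix (Fin k) (Fin l) ℝ → _) =
      ⇑(Matrix.toEuclideanLin.trans LinearMap.toContinuousLinearMap).toLinearMap := rfl
  rw [this]
  exact LinearMap.continuous_of_finiteDimensional _

lemma continuous_opN : Continuous (opN : Matrix (Fin k) (Fin l) ℝ → ℝ) :=
  continuous_norm.comp continuous_appL

@[simp]
lemma opN_zero : opN (0 : Matrix (Fin k) (Fin l) ℝ) = 0 := by
  simp [opN]

lemma ContinuousOn.app {α : Type*} [TopologicalSpace α] {S : Set α}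
    {f : α → EuclideanSpace ℝ (Fin l)} (hf : ContinuousOn f S) (M : Matrix (Fin k) (Fin l) ℝ) :
    ContinuousOn (fun a => app M (f a)) S :=
  (appL M).continuous.comp_continuousOn hf

lemma abs_inner_app_self_sub_le (M : Matrix (Fin k) (Fin k) ℝ) {v w : EuclideanSpace ℝ (Fin k)}
    {K : ℝ} (hv : ‖v‖ ≤ K) (hw : ‖w‖ ≤ K) :
    |inner ℝ v (app M v) - inner ℝ w (app M w)| ≤ 2 * K * opN M * ‖v - w‖ := by
  have hsplit : inner ℝ v (app M v) - inner ℝ w (app M w)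
      = inner ℝ (v - w) (app M v) + inner ℝ w (app M (v - w)) := by
    rw [app_sub, inner_sub_left, inner_sub_right]; ring
  have h₁ : |inner ℝ (v - w) (app M v)| ≤ ‖v - w‖ * (opN M * K) :=
    (abs_real_inner_le_norm _ _).trans
      (by gcongr; exact (norm_app_le M v).trans (by gcongr; exact opN_nonneg M))
  have h₂ : |inner ℝ w (app M (v - w))| ≤ K * (opN M * ‖v - w‖) :=
    (abs_real_inner_le_norm _ _).trans
      (mul_le_mul hw (norm_app_le M _) (norm_nonneg _) ((norm_nonneg v).trans hv))
  calc |inner ℝ v (app M v) - inner ℝ w (app M w)|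
      ≤ ‖v - w‖ * (opN M * K) + K * (opN M * ‖v - w‖) := by
        rw [hsplit]; exact (abs_add_le _ _).trans (add_le_add h₁ h₂)
    _ = 2 * K * opN M * ‖v - w‖ := by ring

end MatrixOperator

section Trajectory

variable {n m : ℕ} {B : Matrix (Fin n) (Fin m) ℝ} {s T C : ℝ} {x₀ : EuclideanSpace ℝ (Fin n)}
  {A A' : Matrix (Fin n) (Fin n) ℝ} {u : ℝ → EuclideanSpace ℝ (Fin m)}
  {x x' : ℝ → EuclideanSpace ℝ (Fin n)}

lemma IsTraj.intervalIntegrable (hx : IsTraj B s T x₀ A u x) (hu : IntegrableOn u (Icc s T))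
    {t : ℝ} (ht : t ∈ Icc s T) :
    IntervalIntegrable (fun τ => app A (x τ) + app B (u τ)) volume s t := by
  have hsub : Icc s t ⊆ Icc s T := Icc_subset_Icc_right ht.2
  rw [intervalIntegrable_iff_integrableOn_Icc_of_le ht.1]
  exact ((hx.1.mono hsub).app A).integrableOn_Icc.add ((appL B).integrable_comp (hu.mono_set hsub))

theorem IsTraj.norm_le (hx : IsTraj B s T x₀ A u x) (hu : IntegrableOn u (Icc s T))
    (hA : opN A ≤ C) :
    ∀ t ∈ Icc s T, ‖x t‖ ≤ (‖x₀‖ + ∫ τ in s..T, ‖app B (u τ)‖) * exp (C * (T - s)) := by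
  intro t ht
  have hC : 0 ≤ C := (opN_nonneg A).trans hA
  calc ‖x t‖ ≤ (‖x₀‖ + ∫ τ in s..T, ‖app B (u τ)‖) * exp (C * (t - s)) :=
        norm_le_of_eq_add_integral_clm (L := appL A) hA hx.1 ((appL B).integrable_comp hu) hx.2 t ht
    _ ≤ (‖x₀‖ + ∫ τ in s..T, ‖app B (u τ)‖) * exp (C * (T - s)) := by
        have : 0 ≤ ∫ τ in s..T, ‖app B (u τ)‖ :=
          intervalIntegral.integral_nonneg (ht.1.trans ht.2) fun _ _ => norm_nonneg _
        gcongr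
        exact ht.2

theorem IsTraj.norm_sub_le (hx : IsTraj B s T x₀ A u x) (hx' : IsTraj B s T x₀ A' u x')
    (hu : IntegrableOn u (Icc s T)) (hA : opN A ≤ C) {M : ℝ} (hM : ∀ t ∈ Icc s T, ‖x' t‖ ≤ M) :
    ∀ t ∈ Icc s T, ‖x t - x' t‖ ≤ opN (A - A') * (M * (T - s) * exp (C * (T - s))) := by
  intro t ht
  have hsT : s ≤ T := ht.1.trans ht.2
  have hC : 0 ≤ C := (opN_nonneg A).trans hA
  have hM0 : 0 ≤ M := (norm_nonneg _).trans (hM s (left_mem_Icc.2 hsT))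
  set w := fun τ => app (A - A') (x' τ)
  have hw : ContinuousOn w (Icc s T) := hx'.1.app (A - A')
  have heq : ∀ r ∈ Icc s T, x r - x' r = 0 + ∫ τ in s..r, (appL A (x τ - x' τ) + w τ) := by
    intro r hr
    rw [hx.2 r hr, hx'.2 r hr, zero_add, add_sub_add_left_eq_sub,
      ← intervalIntegral.integral_sub (hx.intervalIntegrable hu hr) (hx'.intervalIntegrable hu hr)]
    refine intervalIntegral.integral_congr fun τ _ => ?_
    simp only [w, coe_appL, app_sub, sub_app]
    abel
  have hw_le : ∫ τ in s..T, ‖w τ‖ ≤ opN (A - A') * M * (T - s) := by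
    calc ∫ τ in s..T, ‖w τ‖ ≤ ∫ _ in s..T, opN (A - A') * M :=
          intervalIntegral.integral_mono_on hsT (hw.norm.intervalIntegrable_of_Icc hsT)
            intervalIntegrable_const fun τ hτ =>
              (norm_app_le _ _).trans (by gcongr; exacts [opN_nonneg _, hM τ hτ])
      _ = opN (A - A') * M * (T - s) := by
          rw [intervalIntegral.integral_const, smul_eq_mul]; ring
  calc ‖x t - x' t‖ ≤ (‖(0 : EuclideanSpace ℝ (Fin n))‖ + ∫ τ in s..T, ‖w τ‖) * exp (C * (t - s)) :=
        norm_le_of_eq_add_integral_clm (L := appL A) hA (hx.1.sub hx'.1) hw.integrableOn_Icc heq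
          t ht
    _ ≤ (opN (A - A') * M * (T - s)) * exp (C * (T - s)) := by
        rw [norm_zero, zero_add]
        have : 0 ≤ opN (A - A') * M * (T - s) := by
          have := opN_nonneg (A - A'); have : 0 ≤ T - s := by linarith
          positivity
        gcongr
        exact ht.2
    _ = opN (A - A') * (M * (T - s) * exp (C * (T - s))) := by ring

end Trajectory

section Cost

variable {n m : ℕ} (Q Qf : Matrix (Fin n) (Fin n) ℝ) (R : Matrix (Fin m) (Fin m) ℝ) {s T : ℝ}
  {u : ℝ → EuclideanSpace ℝ (Fin m)}

lemma intervalIntegrable_inner_app_self (hsT : s ≤ T) (hu : IntegrableOn u (Icc s T))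
    (hu2 : IntegrableOn (fun t => ‖u t‖ ^ 2) (Icc s T)) :
    IntervalIntegrable (fun t => inner ℝ (u t) (app R (u t))) volume s T := by
  rw [intervalIntegrable_iff_integrableOn_Icc_of_le hsT]
  have hmeas : AEStronglyMeasurable (fun t => inner ℝ (u t) (app R (u t)))
      (volume.restrict (Icc s T)) :=
    (continuous_id.inner (appL R).continuous).comp_aestronglyMeasurable hu.aestronglyMeasurable
  refine (hu2.const_mul (opN R)).mono' hmeas (ae_of_all _ fun t => ?_)
  calc ‖inner ℝ (u t) (app R (u t))‖ ≤ ‖u t‖ * (opN R * ‖u t‖) :=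
        (norm_inner_le_norm _ _).trans (by gcongr; exact norm_app_le R (u t))
    _ = opN R * ‖u t‖ ^ 2 := by ring

theorem abs_cost_sub_cost_le (hsT : s ≤ T) (hu : IntegrableOn u (Icc s T))
    (hu2 : IntegrableOn (fun t => ‖u t‖ ^ 2) (Icc s T)) {x x' : ℝ → EuclideanSpace ℝ (Fin n)}
    (hx : ContinuousOn x (Icc s T)) (hx' : ContinuousOn x' (Icc s T)) {K δ : ℝ}
    (hxK : ∀ t ∈ Icc s T, ‖x t‖ ≤ K) (hx'K : ∀ t ∈ Icc s T, ‖x' t‖ ≤ K)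
    (hδ : ∀ t ∈ Icc s T, ‖x t - x' t‖ ≤ δ) :
    |cost Q Qf R s T x u - cost Q Qf R s T x' u| ≤ K * (opN Q * (T - s) + opN Qf) * δ := by
  have hK : 0 ≤ K := (norm_nonneg _).trans (hxK s (left_mem_Icc.2 hsT))
  have hKQ : 0 ≤ 2 * K * opN Q := mul_nonneg (mul_nonneg zero_le_two hK) (opN_nonneg Q)
  have hKQf : 0 ≤ 2 * K * opN Qf := mul_nonneg (mul_nonneg zero_le_two hK) (opN_nonneg Qf)
  have hT : T ∈ Icc s T := right_mem_Icc.2 hsT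
  have hq : ∀ y : ℝ → EuclideanSpace ℝ (Fin n), ContinuousOn y (Icc s T) →
      IntervalIntegrable (fun t => inner ℝ (y t) (app Q (y t))) volume s T := fun y hy =>
    (hy.inner (hy.app Q)).intervalIntegrable_of_Icc hsT
  have hr := intervalIntegrable_inner_app_self R hsT hu hu2
  have hdiff : cost Q Qf R s T x u - cost Q Qf R s T x' u
      = (1/2) * (∫ t in s..T, (inner ℝ (x t) (app Q (x t)) - inner ℝ (x' t) (app Q (x' t))))
        + (1/2) * (inner ℝ (x T) (app Qf (x T)) - inner ℝ (x' T) (app Qf (x' T))) := by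
    simp only [cost]
    rw [intervalIntegral.integral_add (hq x hx) hr, intervalIntegral.integral_add (hq x' hx') hr,
      intervalIntegral.integral_sub (hq x hx) (hq x' hx')]
    ring
  have hrun : |∫ t in s..T, (inner ℝ (x t) (app Q (x t)) - inner ℝ (x' t) (app Q (x' t)))|
      ≤ 2 * K * opN Q * δ * (T - s) := by
    have := intervalIntegral.norm_integral_le_of_norm_le_const (C := 2 * K * opN Q * δ)
      (f := fun t => inner ℝ (x t) (app Q (x t)) - inner ℝ (x' t) (app Q (x' t))) (a := s) (b := T)
      fun t ht => by
        have ht : t ∈ Icc s T := Ioc_subset_Icc_self (uIoc_of_le hsT ▸ ht)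
        exact (abs_inner_app_self_sub_le Q (hxK t ht) (hx'K t ht)).trans
          (mul_le_mul_of_nonneg_left (hδ t ht) hKQ)
    rwa [abs_of_nonneg (sub_nonneg.2 hsT)] at this
  have hend : |inner ℝ (x T) (app Qf (x T)) - inner ℝ (x' T) (app Qf (x' T))|
      ≤ 2 * K * opN Qf * δ :=
    (abs_inner_app_self_sub_le Qf (hxK T hT) (hx'K T hT)).trans
      (mul_le_mul_of_nonneg_left (hδ T hT) hKQf)
  rw [hdiff]
  calc _ ≤ (1/2) * (2 * K * opN Q * δ * (T - s)) + (1/2) * (2 * K * opN Qf * δ) := by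
        refine (abs_add_le _ _).trans ?_
        rw [abs_mul, abs_mul, abs_of_pos one_half_pos]
        gcongr
    _ = K * (opN Q * (T - s) + opN Qf) * δ := by ring

end Cost

theorem continuousOn_cost_of_isTraj {n m : ℕ} (Q Qf : Matrix (Fin n) (Fin n) ℝ)
    (R : Matrix (Fin m) (Fin m) ℝ) {B : Matrix (Fin n) (Fin m) ℝ} {s T C : ℝ}
    {x₀ : EuclideanSpace ℝ (Fin n)} {𝒜 : Set (Matrix (Fin n) (Fin n) ℝ)}
    (hC : ∀ A ∈ 𝒜, opN A ≤ C) {u : ℝ → EuclideanSpace ℝ (Fin m)}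
    {x : Matrix (Fin n) (Fin n) ℝ → ℝ → EuclideanSpace ℝ (Fin n)}
    (hx : ∀ A ∈ 𝒜, IsTraj B s T x₀ A u (x A)) (hsT : s ≤ T) (hu : IntegrableOn u (Icc s T))
    (hu2 : IntegrableOn (fun t => ‖u t‖ ^ 2) (Icc s T)) :
    ContinuousOn (fun A => cost Q Qf R s T (x A) u) 𝒜 := by
  set M := (‖x₀‖ + ∫ τ in s..T, ‖app B (u τ)‖) * exp (C * (T - s))
  have hM : ∀ A ∈ 𝒜, ∀ t ∈ Icc s T, ‖x A t‖ ≤ M := fun A hA => (hx A hA).norm_le hu (hC A hA)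
  set K := M * (opN Q * (T - s) + opN Qf) * (M * (T - s) * exp (C * (T - s)))
  have hlip : ∀ A ∈ 𝒜, ∀ A₀ ∈ 𝒜,
      |cost Q Qf R s T (x A) u - cost Q Qf R s T (x A₀) u| ≤ K * opN (A - A₀) := by
    intro A hA A₀ hA₀
    have := abs_cost_sub_cost_le Q Qf R hsT hu hu2 (hx A hA).1 (hx A₀ hA₀).1 (hM A hA) (hM A₀ hA₀)
      ((hx A hA).norm_sub_le (hx A₀ hA₀) hu (hC A hA) (hM A₀ hA₀))
    linarith
  intro A₀ hA₀
  rw [ContinuousWithinAt, tendsto_iff_norm_sub_tendsto_zero]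
  have hK : Tendsto (fun A => K * opN (A - A₀)) (𝓝[𝒜] A₀) (𝓝 0) := by
    have hc : Continuous fun A => K * opN (A - A₀) :=
      continuous_const.mul (continuous_opN.comp (continuous_id.sub continuous_const))
    simpa using (hc.tendsto A₀).mono_left nhdsWithin_le_nhds
  refine squeeze_zero_norm' (eventually_nhdsWithin_of_forall fun A hA => ?_) hK
  rw [norm_norm, Real.norm_eq_abs]
  exact hlip A hA A₀ hA₀

theorem tendsto_integral_of_continuousOn_of_isCompact {X ι : Type*} [TopologicalSpace X]
    [NormalSpace X] [T2Space X] [MeasurableSpace X] {l : Filter ι} {μ : ι → Measure X}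
    {ν : Measure X} {K : Set X} (hK : IsCompact K) (hμK : ∀ i, μ i Kᶜ = 0) (hνK : ν Kᶜ = 0)
    (hw : ∀ f : X → ℝ, Continuous f → (∃ C, ∀ x, |f x| ≤ C) →
      Tendsto (fun i => ∫ x, f x ∂μ i) l (𝓝 (∫ x, f x ∂ν)))
    {F : X → ℝ} (hF : ContinuousOn F K) :
    Tendsto (fun i => ∫ x, F x ∂μ i) l (𝓝 (∫ x, F x ∂ν)) := by
  have : CompactSpace K := isCompact_iff_compactSpace.mp hK
  obtain ⟨g, -, hg⟩ := BoundedContinuousFunction.exists_norm_eq_domRestrict_eq_of_closed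
    (BoundedContinuousFunction.mkOfCompact ⟨K.domRestrict F, hF.domRestrict⟩) hK.isClosed
  have hgF : EqOn g F K := fun x hx => DFunLike.congr_fun hg ⟨x, hx⟩
  have hint : ∀ ρ : Measure X, ρ Kᶜ = 0 → ∫ x, F x ∂ρ = ∫ x, g x ∂ρ := fun ρ hρ =>
    integral_congr_ae (Filter.eventually_of_mem (mem_ae_iff.2 hρ) fun x hx => (hgF hx).symm)
  simp only [hint _ (hμK _), hint ν hνK]
  exact hw g g.continuous ⟨‖g‖, fun x => by simpa using g.norm_coe_le_norm x⟩

theorem stmt_12_general {n m : ℕ} (T : ℝ) (s : ℝ) (hs : s ∈ Set.Icc 0 T)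
    (x₀ : EuclideanSpace ℝ (Fin n)) (B : Matrix (Fin n) (Fin m) ℝ)
    (𝒜 : Set (Matrix (Fin n) (Fin n) ℝ)) (h𝒜 : IsCompact 𝒜)
    (C𝒜 : ℝ) (hC𝒜 : ∀ A ∈ 𝒜, opN A ≤ C𝒜)
    (Q Qf : Matrix (Fin n) (Fin n) ℝ) (R : Matrix (Fin m) (Fin m) ℝ)
    (πN : ℕ → Measure (Matrix (Fin n) (Fin n) ℝ))
    (πlim : Measure (Matrix (Fin n) (Fin n) ℝ))
    (hπNs : ∀ N, (πN N) 𝒜ᶜ = 0) (hπlims : πlim 𝒜ᶜ = 0)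
    -- weak-* convergence `πᴺ → π∞`
    (hw : ∀ f : Matrix (Fin n) (Fin n) ℝ → ℝ, Continuous f → (∃ C, ∀ A, |f A| ≤ C) →
      Tendsto (fun N => ∫ A, f A ∂(πN N)) atTop (𝓝 (∫ A, f A ∂πlim)))
    -- a fixed measurable control with finite cost, and its trajectories
    (u : ℝ → EuclideanSpace ℝ (Fin m)) (hu : IntegrableOn u (Set.Icc s T))
    (hu2 : IntegrableOn (fun t => ‖u t‖ ^ 2) (Set.Icc s T))
    (x : Matrix (Fin n) (Fin n) ℝ → ℝ → EuclideanSpace ℝ (Fin n))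
    (hx : ∀ A ∈ 𝒜, IsTraj B s T x₀ A u (x A)) :
    Tendsto (fun N => Jcost Q Qf R s T (πN N) u x) atTop
      (𝓝 (Jcost Q Qf R s T πlim u x)) := by
  have : NormalSpace (Matrix (Fin n) (Fin n) ℝ) := inferInstanceAs (NormalSpace (Fin n → Fin n → ℝ))
  exact tendsto_integral_of_continuousOn_of_isCompact h𝒜 hπNs hπlims hw
    (continuousOn_cost_of_isTraj Q Qf R hC𝒜 hx hs.2 hu hu2)

theorem stmt_12 {n m : ℕ} (T : ℝ) (hT : 0 < T) (s : ℝ) (hs : s ∈ Set.Icc 0 T)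
    (x₀ : EuclideanSpace ℝ (Fin n)) (B : Matrix (Fin n) (Fin m) ℝ)
    (𝒜 : Set (Matrix (Fin n) (Fin n) ℝ)) (h𝒜 : IsCompact 𝒜)
    (C𝒜 : ℝ) (hC𝒜 : ∀ A ∈ 𝒜, opN A ≤ C𝒜)
    (Q Qf : Matrix (Fin n) (Fin n) ℝ) (R : Matrix (Fin m) (Fin m) ℝ)
    (hQ : Q.PosSemidef) (hQf : Qf.PosSemidef) (hR : R.PosDef)
    (πN : ℕ → Measure (Matrix (Fin n) (Fin n) ℝ))
    (πlim : Measure (Matrix (Fin n) (Fin n) ℝ))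
    (hπN : ∀ N, IsProbabilityMeasure (πN N)) (hπlim : IsProbabilityMeasure πlim)
    (hπNs : ∀ N, (πN N) 𝒜ᶜ = 0) (hπlims : πlim 𝒜ᶜ = 0)
    -- weak-* convergence `πᴺ → π∞`
    (hw : ∀ f : Matrix (Fin n) (Fin n) ℝ → ℝ, Continuous f → (∃ C, ∀ A, |f A| ≤ C) →
      Tendsto (fun N => ∫ A, f A ∂(πN N)) atTop (𝓝 (∫ A, f A ∂πlim)))
    -- a fixed measurable control with finite cost, and its trajectories
    (u : ℝ → EuclideanSpace ℝ (Fin m)) (hu : IntegrableOn u (Set.Icc s T))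
    (hu2 : IntegrableOn (fun t => ‖u t‖ ^ 2) (Set.Icc s T))
    (x : Matrix (Fin n) (Fin n) ℝ → ℝ → EuclideanSpace ℝ (Fin n))
    (hx : ∀ A ∈ 𝒜, IsTraj B s T x₀ A u (x A)) :
    Tendsto (fun N => Jcost Q Qf R s T (πN N) u x) atTop
      (𝓝 (Jcost Q Qf R s T πlim u x)) :=
  stmt_12_general T s hs x₀ B 𝒜 h𝒜 C𝒜 hC𝒜 Q Qf R πN πlim hπNs hπlims hw u hu hu2 x hx
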